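/- There exist constants C > 0 and ε₀ ∈ (0,1) such that for all ε ∈ (0, ε₀), all h, A > 0 and all l₁, l₂ > h with |l₁ − l₂| < A and A/h ≤ ε, the following holds. Let R₁ = [0,l₁] × [0,h] and R₂ = [0,l₂] × [0,h] be euclidean rectangles in ℝ², and let φ_b, φ_t : [0,l₁] → [0,l₂] be increasing C¹ bijections, each of which is an (ε,A)-almost-isometry. Define f : ∂R₁ → ∂R₂ by f(x,0) = (φ_b(x),0), f(x,h) = (φ_t(x),h), f(0,y) = (0,y), and f(l₁,y) = (l₂,y). Then f extends to a homeomorphism F : R₁ → R₂ which is (1+Cε)-quasiconformal in the Lipschitz sense on the interior of R₁. -/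

import Mathlib

open Complex MeasureTheory Metric Set

/-- `f` is `K`-quasiconformal in the Lipschitz sense on the set `S ⊆ ℂ`:
`f` is injective and continuous on `S`, locally Lipschitz on the interior of `S`,
and at Lebesgue-almost every point of the interior of `S` it is differentiable with
(real) derivative `A` satisfying `‖A‖² ≤ K · det A`. -/
def IsQCLip (K : ℝ) (S : Set ℂ) (f : ℂ → ℂ) : Prop :=
  Set.InjOn f S ∧ ContinuousOn f S ∧
  (∀ z ∈ interior S, ∃ L : NNReal, ∃ δ > (0:ℝ),
    LipschitzOnWith L f (Metric.ball z δ ∩ interior S)) ∧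
  (∀ᵐ z ∂(MeasureTheory.volume.restrict (interior S)), ∃ A : ℂ →L[ℝ] ℂ,
    HasFDerivAt f A z ∧ ‖A‖ ^ 2 ≤ K * LinearMap.det (A : ℂ →ₗ[ℝ] ℂ))

/-- `φ` is an increasing C¹ bijection from `[0,l₁]` onto `[0,l₂]` which is an
`(ε,A)`-almost-isometry: `|φ′ − 1| ≤ ε` pointwise and
`|(φ(x₂) − φ(x₁)) − (x₂ − x₁)| ≤ A` for all `x₁ ≤ x₂` in `[0,l₁]`. -/
def AlmostIsom (ε A l₁ l₂ : ℝ) (φ : ℝ → ℝ) : Prop :=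
  φ 0 = 0 ∧ φ l₁ = l₂ ∧ StrictMonoOn φ (Set.Icc 0 l₁) ∧
  ContDiffOn ℝ 1 φ (Set.Icc 0 l₁) ∧
  (∀ x ∈ Set.Icc 0 l₁, |derivWithin φ (Set.Icc 0 l₁) x - 1| ≤ ε) ∧
  (∀ x₁ ∈ Set.Icc 0 l₁, ∀ x₂ ∈ Set.Icc 0 l₁, x₁ ≤ x₂ →
    |(φ x₂ - φ x₁) - (x₂ - x₁)| ≤ A)

/-- The closed euclidean rectangle `[0,l] × [0,h]` in `ℂ`. -/
def Rect (l h : ℝ) : Set ℂ :=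
  {z : ℂ | z.re ∈ Set.Icc 0 l ∧ z.im ∈ Set.Icc 0 h}


/-! The extension is the vertical affine interpolation
`F (x + iy) = (1 - y/h) φb x + (y/h) φt x + iy`. Each horizontal slice of `F` is a convex
combination of two increasing homeomorphisms `[0,l₁] → [0,l₂]`, so `F` is a homeomorphism of
the rectangles. Its differential is the shear `[[a, b], [0, 1]]` with
`a = (1 - y/h) φb' x + (y/h) φt' x` within `ε` of `1`, and `b = (φt x - φb x)/h`, which is at
most `2A/h ≤ 2ε` because both boundary maps stay within `A` of the identity. Hence
`‖DF‖ ≤ 1 + 3ε` while `det DF = a ≥ 1 - ε`, which gives `‖DF‖² ≤ (1 + 24ε) det DF` for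
`ε ≤ 1/2`. -/

namespace AlmostIsom

variable {ε A l₁ l₂ : ℝ} {φ ψ : ℝ → ℝ}

theorem abs_sub_self_le (hφ : AlmostIsom ε A l₁ l₂ φ) {x : ℝ} (hx : x ∈ Icc 0 l₁) :
    |φ x - x| ≤ A := by
  obtain ⟨h0, -, -, -, -, hA⟩ := hφ
  simpa [h0] using hA 0 ⟨le_rfl, hx.1.trans hx.2⟩ x hx hx.1

theorem abs_sub_le_two_mul (hφ : AlmostIsom ε A l₁ l₂ φ) (hψ : AlmostIsom ε A l₁ l₂ ψ)
    {x : ℝ} (hx : x ∈ Icc 0 l₁) : |ψ x - φ x| ≤ 2 * A := by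
  calc |ψ x - φ x| = |(ψ x - x) - (φ x - x)| := by ring_nf
    _ ≤ |ψ x - x| + |φ x - x| := abs_sub _ _
    _ ≤ 2 * A := by linarith [hφ.abs_sub_self_le hx, hψ.abs_sub_self_le hx]

theorem abs_sub_le_mul (hφ : AlmostIsom ε A l₁ l₂ φ) {x y : ℝ} (hx : x ∈ Icc 0 l₁)
    (hy : y ∈ Icc 0 l₁) : |φ x - φ y| ≤ (1 + ε) * |x - y| := by
  obtain ⟨-, -, -, hC1, hder, -⟩ := hφ
  have hbound : ∀ t ∈ Icc 0 l₁, ‖derivWithin φ (Icc 0 l₁) t‖ ≤ 1 + ε := fun t ht => by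
    have := abs_sub_abs_le_abs_sub (derivWithin φ (Icc 0 l₁) t) 1
    rw [abs_one] at this
    rw [Real.norm_eq_abs]
    linarith [hder t ht]
  simpa [Real.norm_eq_abs] using (convex_Icc 0 l₁).norm_image_sub_le_of_norm_derivWithin_le
    (hC1.differentiableOn one_ne_zero) hbound hy hx

theorem hasDerivAt (hφ : AlmostIsom ε A l₁ l₂ φ) {x : ℝ} (hx : x ∈ Ioo 0 l₁) :
    HasDerivAt φ (derivWithin φ (Icc 0 l₁) x) x := by
  obtain ⟨-, -, -, hC1, -⟩ := hφ
  exact ((hC1.differentiableOn one_ne_zero x (Ioo_subset_Icc_self hx)).hasDerivWithinAt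
    ).hasDerivAt (Icc_mem_nhds hx.1 hx.2)

end AlmostIsom

theorem StrictMonoOn.convex_comb {α : Type*} [Preorder α] {s : Set α} {f g : α → ℝ}
    (hf : StrictMonoOn f s) (hg : StrictMonoOn g s) {t : ℝ} (ht : t ∈ Icc 0 1) :
    StrictMonoOn (fun x => (1 - t) * f x + t * g x) s := by
  intro x hx y hy hxy
  have hfxy := hf hx hy hxy
  have hgxy := hg hx hy hxy
  rcases ht.2.lt_or_eq with ht1 | rfl
  · nlinarith [ht.1]
  · simpa using hgxy

theorem StrictMonoOn.bijOn_Icc {α δ : Type*} [ConditionallyCompleteLinearOrder α]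
    [TopologicalSpace α] [OrderTopology α] [DenselyOrdered α] [LinearOrder δ]
    [TopologicalSpace δ] [OrderClosedTopology δ] {f : α → δ} {a b : α} (hab : a ≤ b)
    (hf : StrictMonoOn f (Icc a b)) (hc : ContinuousOn f (Icc a b)) :
    BijOn f (Icc a b) (Icc (f a) (f b)) :=
  hc.image_Icc_of_monotoneOn hab hf.monotoneOn ▸ hf.injOn.bijOn_image

theorem bijOn_rect_of_bijOn_slices {l₁ l₂ h : ℝ} {g : ℝ → ℝ → ℝ}
    (hg : ∀ y ∈ Icc 0 h, BijOn (g y) (Icc 0 l₁) (Icc 0 l₂)) :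
    BijOn (fun z : ℂ => (g z.im z.re : ℂ) + z.im • I) (Rect l₁ h) (Rect l₂ h) := by
  refine ⟨fun z ⟨hx, hy⟩ => ?_, fun z ⟨hzx, hzy⟩ w ⟨hwx, hwy⟩ hzw => ?_, fun w ⟨hx, hy⟩ => ?_⟩
  · simpa [Rect] using ⟨(hg _ hy).mapsTo hx, hy⟩
  · have him : z.im = w.im := by simpa using congrArg im hzw
    have hre : g z.im z.re = g z.im w.re := by simpa [him] using congrArg re hzw
    exact Complex.ext ((hg _ hzy).injOn hzx hwx hre) him
  · obtain ⟨x, hx, hgx⟩ := (hg _ hy).surjOn hx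
    exact ⟨x + w.im • I, by simpa [Rect] using ⟨hx, hy⟩, Complex.ext (by simpa using hgx) (by simp)⟩

theorem interior_Rect (l h : ℝ) : interior (Rect l h) = Ioo 0 l ×ℂ Ioo 0 h := by
  rw [show Rect l h = Icc 0 l ×ℂ Icc 0 h from rfl, Complex.interior_reProdIm, interior_Icc,
    interior_Icc]

noncomputable def vertInterp (h : ℝ) (φb φt : ℝ → ℝ) (z : ℂ) : ℂ :=
  ((1 - z.im / h) * φb z.re + z.im / h * φt z.re : ℝ) + z.im • I

section vertInterp

variable {h : ℝ} {φb φt : ℝ → ℝ}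

@[simp]
theorem vertInterp_re (z : ℂ) :
    (vertInterp h φb φt z).re = (1 - z.im / h) * φb z.re + z.im / h * φt z.re := by
  simp [vertInterp]

@[simp]
theorem vertInterp_im (z : ℂ) : (vertInterp h φb φt z).im = z.im := by
  simp [vertInterp]

theorem lipschitzOnWith_vertInterp {l L M : ℝ} (hh : 0 < h) (hL : 0 ≤ L)
    (hb : ∀ x ∈ Icc 0 l, ∀ x' ∈ Icc 0 l, |φb x - φb x'| ≤ L * |x - x'|)
    (ht : ∀ x ∈ Icc 0 l, ∀ x' ∈ Icc 0 l, |φt x - φt x'| ≤ L * |x - x'|)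
    (hM : ∀ x ∈ Icc 0 l, |φt x - φb x| ≤ M) :
    LipschitzOnWith (L + M / h + 1).toNNReal (vertInterp h φb φt) (Rect l h) := by
  refine LipschitzOnWith.of_dist_le' fun z ⟨hzx, hzy⟩ w ⟨hwx, hwy⟩ => ?_
  set t := z.im / h
  set s := w.im / h
  have ht0 : 0 ≤ t := div_nonneg hzy.1 hh.le
  have ht1 : t ≤ 1 := (div_le_one hh).2 hzy.2
  have hM0 : 0 ≤ M := (abs_nonneg _).trans (hM _ hwx)
  have hts : |t - s| = |z.im - w.im| / h := by
    rw [← sub_div, abs_div, abs_of_pos hh]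
  have hre : |(vertInterp h φb φt z).re - (vertInterp h φb φt w).re|
      ≤ L * |z.re - w.re| + M / h * |z.im - w.im| := by
    have hsplit : (vertInterp h φb φt z).re - (vertInterp h φb φt w).re
        = (1 - t) * (φb z.re - φb w.re) + t * (φt z.re - φt w.re)
          + (t - s) * (φt w.re - φb w.re) := by
      simp only [vertInterp_re, t, s]; ring
    rw [hsplit]
    calc _ ≤ (1 - t) * |φb z.re - φb w.re| + t * |φt z.re - φt w.re|
          + |t - s| * |φt w.re - φb w.re| := by
          refine (abs_add_le _ _).trans (add_le_add ((abs_add_le _ _).trans ?_) ?_)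
          · rw [abs_mul, abs_mul, abs_of_nonneg (sub_nonneg.2 ht1), abs_of_nonneg ht0]
          · rw [abs_mul]
      _ ≤ (1 - t) * (L * |z.re - w.re|) + t * (L * |z.re - w.re|)
          + |z.im - w.im| / h * M := by
          rw [← hts]
          gcongr
          · exact hb _ hzx _ hwx
          · exact ht _ hzx _ hwx
          · exact hM _ hwx
      _ = L * |z.re - w.re| + M / h * |z.im - w.im| := by ring
  have hx : |z.re - w.re| ≤ dist z w := by
    simpa [Complex.dist_eq] using Complex.abs_re_le_norm (z - w)
  have hy : |z.im - w.im| ≤ dist z w := by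
    simpa [Complex.dist_eq] using Complex.abs_im_le_norm (z - w)
  calc dist (vertInterp h φb φt z) (vertInterp h φb φt w)
      ≤ |(vertInterp h φb φt z).re - (vertInterp h φb φt w).re| + |z.im - w.im| := by
        simpa [Complex.dist_eq] using Complex.norm_le_abs_re_add_abs_im
          (vertInterp h φb φt z - vertInterp h φb φt w)
    _ ≤ L * |z.re - w.re| + M / h * |z.im - w.im| + |z.im - w.im| := by gcongr
    _ ≤ L * dist z w + M / h * dist z w + dist z w := by
        have : 0 ≤ M / h := div_nonneg hM0 hh.le
        gcongr
    _ = (L + M / h + 1) * dist z w := by ring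

end vertInterp

noncomputable def shearCLM (a b : ℝ) : ℂ →L[ℝ] ℂ :=
  ofRealCLM.comp (a • reCLM + b • imCLM) + imCLM.smulRight I

section shearCLM

variable {a b : ℝ}

@[simp]
theorem shearCLM_apply_re (w : ℂ) : (shearCLM a b w).re = a * w.re + b * w.im := by
  simp [shearCLM]

@[simp]
theorem shearCLM_apply_im (w : ℂ) : (shearCLM a b w).im = w.im := by
  simp [shearCLM]

theorem det_shearCLM : LinearMap.det (shearCLM a b : ℂ →ₗ[ℝ] ℂ) = a := by
  rw [← LinearMap.det_toMatrix Complex.basisOneI, Matrix.det_fin_two]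
  simp [LinearMap.toMatrix_apply]

theorem norm_shearCLM_le : ‖shearCLM a b‖ ≤ 1 + |a - 1| + |b| := by
  refine ContinuousLinearMap.opNorm_le_bound _ (by positivity) fun w => ?_
  have hw : shearCLM a b w = w + ((a - 1) * w.re + b * w.im : ℝ) := by
    apply Complex.ext <;> simp; ring
  calc ‖shearCLM a b w‖ ≤ ‖w‖ + (|a - 1| * |w.re| + |b| * |w.im|) := by
        rw [hw]
        refine (norm_add_le _ _).trans (add_le_add le_rfl ?_)
        rw [Complex.norm_real, Real.norm_eq_abs, ← abs_mul, ← abs_mul]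
        exact abs_add_le _ _
    _ ≤ ‖w‖ + (|a - 1| * ‖w‖ + |b| * ‖w‖) := by
        gcongr
        exacts [Complex.abs_re_le_norm w, Complex.abs_im_le_norm w]
    _ = (1 + |a - 1| + |b|) * ‖w‖ := by ring

theorem sq_norm_shearCLM_le {ε : ℝ} (hε : ε ≤ 1 / 2) (ha : |a - 1| ≤ ε) (hb : |b| ≤ 2 * ε) :
    ‖shearCLM a b‖ ^ 2 ≤ (1 + 24 * ε) * LinearMap.det (shearCLM a b : ℂ →ₗ[ℝ] ℂ) := by
  have hε0 : 0 ≤ ε := (abs_nonneg _).trans ha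
  have ha' : 1 - ε ≤ a := by linarith [(abs_le.1 ha).1]
  rw [det_shearCLM]
  calc ‖shearCLM a b‖ ^ 2 ≤ (1 + 3 * ε) ^ 2 := by
        gcongr
        linarith [norm_shearCLM_le (a := a) (b := b)]
    _ ≤ (1 + 24 * ε) * (1 - ε) := by nlinarith
    _ ≤ (1 + 24 * ε) * a := by gcongr

end shearCLM

theorem hasFDerivAt_vertInterp {h db dt : ℝ} {φb φt : ℝ → ℝ} {z : ℂ}
    (hb : HasDerivAt φb db z.re) (ht : HasDerivAt φt dt z.re) :
    HasFDerivAt (vertInterp h φb φt)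
      (shearCLM ((1 - z.im / h) * db + z.im / h * dt) ((φt z.re - φb z.re) / h)) z := by
  have hre : HasFDerivAt re reCLM z := reCLM.hasFDerivAt
  have him : HasFDerivAt (fun w : ℂ => w.im / h) (h⁻¹ • imCLM) z := by
    simpa [div_eq_inv_mul] using imCLM.hasFDerivAt.const_mul h⁻¹
  have hu := (((hasFDerivAt_const 1 z).sub him).mul (hb.comp_hasFDerivAt z hre)).add
    (him.mul (ht.comp_hasFDerivAt z hre))
  refine ((ofRealCLM.hasFDerivAt.comp z hu).add (imCLM.smulRight I).hasFDerivAt).congr_fderiv ?_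
  ext w
  simp [shearCLM]
  ring

theorem isQCLip_of_lipschitzOnWith {K : ℝ} {L : NNReal} {S : Set ℂ} {f : ℂ → ℂ}
    (hinj : InjOn f S) (hf : LipschitzOnWith L f S)
    (hD : ∀ z ∈ interior S, ∃ D : ℂ →L[ℝ] ℂ,
      HasFDerivAt f D z ∧ ‖D‖ ^ 2 ≤ K * LinearMap.det (D : ℂ →ₗ[ℝ] ℂ)) :
    IsQCLip K S f :=
  ⟨hinj, hf.continuousOn, fun _ _ => ⟨L, 1, one_pos, hf.mono fun _ hw => interior_subset hw.2⟩,
    ae_restrict_of_forall_mem isOpen_interior.measurableSet hD⟩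

section AlmostIsomPair

variable {ε A h l₁ l₂ : ℝ} {φb φt : ℝ → ℝ}

theorem bijOn_vertInterp (hb : AlmostIsom ε A l₁ l₂ φb) (ht : AlmostIsom ε A l₁ l₂ φt)
    (hh : 0 < h) (hl : 0 ≤ l₁) :
    BijOn (vertInterp h φb φt) (Rect l₁ h) (Rect l₂ h) := by
  obtain ⟨hb0, hbl, hbmono, hbC1, -⟩ := hb
  obtain ⟨ht0, htl, htmono, htC1, -⟩ := ht
  refine bijOn_rect_of_bijOn_slices (g := fun y x => (1 - y / h) * φb x + y / h * φt x)
    fun y hy => ?_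
  have hyh : y / h ∈ Icc (0 : ℝ) 1 := ⟨div_nonneg hy.1 hh.le, (div_le_one hh).2 hy.2⟩
  have hg := (hbmono.convex_comb htmono hyh).bijOn_Icc hl
    ((continuousOn_const.mul hbC1.continuousOn).add (continuousOn_const.mul htC1.continuousOn))
  simpa [hb0, ht0, hbl, htl, ← add_mul] using hg

theorem lipschitzOnWith_vertInterp_of_almostIsom (hb : AlmostIsom ε A l₁ l₂ φb)
    (ht : AlmostIsom ε A l₁ l₂ φt) (hh : 0 < h) (hε : 0 ≤ ε) :
    LipschitzOnWith (1 + ε + 2 * A / h + 1).toNNReal (vertInterp h φb φt) (Rect l₁ h) :=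
  lipschitzOnWith_vertInterp hh (by positivity) (fun _ hx _ hy => hb.abs_sub_le_mul hx hy)
    (fun _ hx _ hy => ht.abs_sub_le_mul hx hy) fun _ hx => hb.abs_sub_le_two_mul ht hx

theorem exists_hasFDerivAt_vertInterp_sq_norm_le (hb : AlmostIsom ε A l₁ l₂ φb)
    (ht : AlmostIsom ε A l₁ l₂ φt) (hh : 0 < h) (hAh : A / h ≤ ε) (hε : ε ≤ 1 / 2)
    {z : ℂ} (hz : z ∈ interior (Rect l₁ h)) :
    ∃ D : ℂ →L[ℝ] ℂ, HasFDerivAt (vertInterp h φb φt) D z ∧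
      ‖D‖ ^ 2 ≤ (1 + 24 * ε) * LinearMap.det (D : ℂ →ₗ[ℝ] ℂ) := by
  rw [interior_Rect] at hz
  obtain ⟨hx, hy⟩ := hz
  have hxI : z.re ∈ Icc 0 l₁ := Ioo_subset_Icc_self hx
  have hD := hasFDerivAt_vertInterp (h := h) (hb.hasDerivAt hx) (ht.hasDerivAt hx)
  have hbt := hb.abs_sub_le_two_mul ht hxI
  obtain ⟨-, -, -, -, hdb, -⟩ := hb
  obtain ⟨-, -, -, -, hdt, -⟩ := ht
  refine ⟨_, hD, sq_norm_shearCLM_le hε ?_ ?_⟩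
  · have hyh : 0 ≤ z.im / h ∧ z.im / h ≤ 1 :=
      ⟨div_nonneg hy.1.le hh.le, (div_le_one hh).2 hy.2.le⟩
    simpa [Real.dist_eq] using convex_closedBall (1 : ℝ) ε (hdb _ hxI) (hdt _ hxI)
      (sub_nonneg.2 hyh.2) hyh.1 (by ring)
  · rw [abs_div, abs_of_pos hh, div_le_iff₀ hh]
    rw [div_le_iff₀ hh] at hAh
    linarith

end AlmostIsomPair

/-- Quasiconformal extension lemma: there are constants `C > 0`, `ε₀ ∈ (0,1)` such that
for `ε ∈ (0,ε₀)`, rectangles `R₁ = [0,l₁]×[0,h]`, `R₂ = [0,l₂]×[0,h]` with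
`l₁,l₂ > h`, `|l₁ − l₂| < A`, `A/h ≤ ε`, any boundary map which is an
`(ε,A)`-almost-isometry `φ_b`, `φ_t` on the horizontal sides and an isometry on the
vertical sides extends to a homeomorphism `F : R₁ → R₂` which is
`(1+Cε)`-quasiconformal in the Lipschitz sense on the interior of `R₁`. -/
theorem qc_extension_rectangles :
    ∃ C > (0:ℝ), ∃ ε₀ ∈ Set.Ioo (0:ℝ) 1, ∀ ε ∈ Set.Ioo (0:ℝ) ε₀,
    ∀ h A l₁ l₂ : ℝ, 0 < h → 0 < A → h < l₁ → h < l₂ → |l₁ - l₂| < A → A / h ≤ ε →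
    ∀ φb φt : ℝ → ℝ, AlmostIsom ε A l₁ l₂ φb → AlmostIsom ε A l₁ l₂ φt →
    ∃ F : ℂ → ℂ,
      Set.BijOn F (Rect l₁ h) (Rect l₂ h) ∧
      ContinuousOn F (Rect l₁ h) ∧
      (∀ x ∈ Set.Icc (0:ℝ) l₁,
        F (x : ℂ) = ((φb x : ℝ) : ℂ) ∧
        F ((x : ℂ) + (h : ℂ) * Complex.I) = ((φt x : ℝ) : ℂ) + (h : ℂ) * Complex.I) ∧
      (∀ y ∈ Set.Icc (0:ℝ) h,
        F ((y : ℂ) * Complex.I) = (y : ℂ) * Complex.I ∧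
        F ((l₁ : ℂ) + (y : ℂ) * Complex.I) = (l₂ : ℂ) + (y : ℂ) * Complex.I) ∧
      IsQCLip (1 + C * ε) (Rect l₁ h) F := by
  refine ⟨24, by norm_num, 1 / 2, ⟨by norm_num, by norm_num⟩, ?_⟩
  rintro ε ⟨hε, hε₀⟩ h A l₁ l₂ hh - hl₁ - - hAh φb φt hb ht
  have hbij := bijOn_vertInterp hb ht hh (hh.trans hl₁).le
  have hlip := lipschitzOnWith_vertInterp_of_almostIsom hb ht hh hε.le
  have hqc : IsQCLip (1 + 24 * ε) (Rect l₁ h) (vertInterp h φb φt) :=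
    isQCLip_of_lipschitzOnWith hbij.injOn hlip
      fun z hz => exists_hasFDerivAt_vertInterp_sq_norm_le hb ht hh hAh hε₀.le hz
  obtain ⟨hb0, hbl, -⟩ := hb
  obtain ⟨ht0, htl, -⟩ := ht
  refine ⟨vertInterp h φb φt, hbij, hlip.continuousOn, fun x _ => ⟨?_, ?_⟩,
    fun y _ => ⟨?_, ?_⟩, hqc⟩ <;>
  apply Complex.ext <;> simp [hh.ne', hb0, ht0, hbl, htl, ← add_mul]
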